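/- arXiv:1612.05812 — 4 statements merged into one kernel-verified Lean document; each statement's English description precedes it below -/
import Mathlib

section
/- If g is positive real and not identically zero, then 1/g is positive real on the open right half-plane (wherever defined), and in fact g has no zeros in the open right half-plane. -/
/-! An analytic function with nonnegative real part on a connected open set is either constant
or an open map there; in the latter case its image is an open subset of the closed right
half-plane, hence lies in the open one. For a positive real `g` a constant value is real
(it is taken on the positive axis), so it is either `0` or has positive real part. Thus a
positive real `g ≢ 0` has `Re g > 0`, so `g` has no zeros and `Re (1/g) = Re g / |g|² ≥ 0`. -/

/-- A transfer function `g : ℂ → ℂ` is positive real (PR) if it is analytic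
(differentiable) on the open right half-plane, real-valued on the positive
real axis, and has nonnegative real part on the open right half-plane. -/
def IsPositiveReal (g : ℂ → ℂ) : Prop :=
  DifferentiableOn ℂ g {s : ℂ | 0 < s.re} ∧
  (∀ x : ℝ, 0 < x → (g (x : ℂ)).im = 0) ∧
  (∀ s : ℂ, 0 < s.re → 0 ≤ (g s).re)

open Complex Set

theorem AnalyticOnNhd.const_or_re_pos_of_re_nonneg {f : ℂ → ℂ} {U : Set ℂ}
    (hf : AnalyticOnNhd ℂ f U) (hUo : IsOpen U) (hUc : IsPreconnected U)
    (hre : ∀ z ∈ U, 0 ≤ (f z).re) :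
    (∃ w, ∀ z ∈ U, f z = w) ∨ ∀ z ∈ U, 0 < (f z).re := by
  refine (hf.is_constant_or_isOpen hUc).imp_right fun hopen z hz => ?_
  have himage : f '' U ⊆ interior {w : ℂ | 0 ≤ w.re} :=
    interior_maximal (image_subset_iff.mpr hre) (hopen U le_rfl hUo)
  rw [interior_setOfPred_le_re] at himage
  exact himage (mem_image_of_mem f hz)

namespace IsPositiveReal

variable {g : ℂ → ℂ}

theorem eq_zero_or_re_pos (hg : IsPositiveReal g) :
    (∀ s : ℂ, 0 < s.re → g s = 0) ∨ ∀ s : ℂ, 0 < s.re → 0 < (g s).re := by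
  obtain ⟨hdiff, hreal, hre⟩ := hg
  have hΩ : IsOpen {s : ℂ | 0 < s.re} := isOpen_lt continuous_const continuous_re
  rcases (hdiff.analyticOnNhd hΩ).const_or_re_pos_of_re_nonneg hΩ
      (convex_halfSpace_re_gt 0).isPreconnected hre with ⟨w, hw⟩ | hpos
  · have hw_one : g 1 = w := hw 1 (by simp)
    have hw_im : w.im = 0 := by simpa [← hw_one] using hreal 1 one_pos
    have hw_re : 0 ≤ w.re := hw_one ▸ hre 1 (by simp)
    rcases hw_re.eq_or_lt with hw_re | hw_re
    · exact Or.inl fun s hs => (hw s hs).trans (Complex.ext hw_re.symm hw_im)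
    · exact Or.inr fun s hs => (hw s hs).symm ▸ hw_re
  · exact Or.inr hpos

theorem ne_zero (hg : IsPositiveReal g) (hnz : ¬ ∀ s : ℂ, 0 < s.re → g s = 0) :
    ∀ s : ℂ, 0 < s.re → g s ≠ 0 := by
  intro s hs hzero
  simpa [hzero] using (hg.eq_zero_or_re_pos.resolve_left hnz) s hs

theorem inv (hg : IsPositiveReal g) (hne : ∀ s : ℂ, 0 < s.re → g s ≠ 0) :
    IsPositiveReal fun s => (g s)⁻¹ := by
  obtain ⟨hdiff, hreal, hre⟩ := hg
  refine ⟨fun s hs => (hdiff s hs).inv (hne s hs), fun x hx => ?_, fun s hs => ?_⟩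
  · simp [inv_im, hreal x hx]
  · rw [inv_re]
    exact div_nonneg (hre s hs) (normSq_nonneg _)

end IsPositiveReal

/-- if `g` is positive real and not identically zero on the open
right half-plane, then `g` has no zeros there and `1/g` is positive real. -/
theorem positiveReal_inv (g : ℂ → ℂ) (hg : IsPositiveReal g)
    (hnz : ¬ ∀ s : ℂ, 0 < s.re → g s = 0) :
    (∀ s : ℂ, 0 < s.re → g s ≠ 0) ∧ IsPositiveReal (fun s => (g s)⁻¹) :=
  ⟨hg.ne_zero hnz, hg.inv (hg.ne_zero hnz)⟩
end

section
/- Let L be a symmetric weighted Laplacian with nonnegative edge weights and let D = diag(d₁,…,dₙ) with dᵢ > 0. If dᵢ · L_{ii} ≤ 1 for every i, then all eigenvalues of D^{1/2} L D^{1/2} lie in the interval [0, 2]. -/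
/-!
Writing `S = diag(√dᵢ)`, the matrix `A = S L S` is conjugate to `S A S⁻¹ = D L`, so both have the
same spectrum. Row `i` of `D L` has diagonal entry `dᵢ Lᵢᵢ ≤ 1`, nonpositive off-diagonal entries
and row sum `0`, so its Gershgorin disc is `[0, 2 dᵢ Lᵢᵢ] ⊆ [0, 2]`.
-/

open Matrix BigOperators

namespace Matrix

variable {ι : Type*} [Fintype ι] [DecidableEq ι]

theorem spectrum_subset_Icc_of_offDiag_nonpos_of_row_sum_eq_zero {M : Matrix ι ι ℝ} {c : ℝ}
    (hoff : ∀ i j, i ≠ j → M i j ≤ 0) (hrow : ∀ i, ∑ j, M i j = 0) (hdiag : ∀ i, M i i ≤ c) :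
    spectrum ℝ M ⊆ Set.Icc 0 (2 * c) := by
  intro μ hμ
  rw [← spectrum_toLin', ← Module.End.hasEigenvalue_iff_mem_spectrum] at hμ
  obtain ⟨k, hk⟩ := eigenvalue_mem_ball hμ
  have hradius : ∑ j ∈ Finset.univ.erase k, ‖M k j‖ = M k k := by
    have hsplit := Finset.add_sum_erase Finset.univ (M k) (Finset.mem_univ k)
    calc ∑ j ∈ Finset.univ.erase k, ‖M k j‖ = ∑ j ∈ Finset.univ.erase k, -M k j :=
          Finset.sum_congr rfl fun j hj ↦
            Real.norm_of_nonpos (hoff k j (Finset.ne_of_mem_erase hj).symm)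
      _ = M k k := by rw [Finset.sum_neg_distrib]; linarith [hrow k]
  rw [Metric.mem_closedBall, Real.dist_eq, hradius, abs_le] at hk
  constructor <;> linarith [hdiag k]

theorem spectrum_diagonal_mul_eq_spectrum_sqrt_conj (L : Matrix ι ι ℝ) {d : ι → ℝ}
    (hd : ∀ i, 0 < d i) :
    spectrum ℝ (diagonal d * L) =
      spectrum ℝ (diagonal (fun i ↦ √(d i)) * L * diagonal (fun i ↦ √(d i))) := by
  set S := diagonal (fun i ↦ √(d i))
  have hS : IsUnit S := isUnit_diagonal.mpr <|
    Pi.isUnit_iff.mpr fun i ↦ (Real.sqrt_pos.mpr (hd i)).ne'.isUnit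
  have hSS : S * S = diagonal d := by
    simp only [S, diagonal_mul_diagonal, Real.mul_self_sqrt (hd _).le]
  calc spectrum ℝ (diagonal d * L) = spectrum ℝ (hS.unit * (S * L * S) * ↑hS.unit⁻¹) := by
        simp only [IsUnit.unit_spec, ← hSS, mul_assoc, IsUnit.mul_val_inv, mul_one]
    _ = spectrum ℝ (S * L * S) := spectrum.units_conjugate

theorem laplacian_row_sum_eq_zero (B : ι → ι → ℝ) (L : Matrix ι ι ℝ)
    (hLoff : ∀ i j, i ≠ j → L i j = -B i j)
    (hLdiag : ∀ i, L i i = ∑ j ∈ Finset.univ.filter (· ≠ i), B i j) (i : ι) :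
    ∑ j, L i j = 0 := by
  rw [← Finset.add_sum_erase _ _ (Finset.mem_univ i), hLdiag i, Finset.filter_ne',
    ← sub_neg_eq_add, sub_eq_zero, ← Finset.sum_neg_distrib]
  exact Finset.sum_congr rfl fun j hj ↦ by
    rw [hLoff i j (Finset.ne_of_mem_erase hj).symm, neg_neg]

end Matrix

theorem scaled_laplacian_eigenvalues_mem_Icc_general (n : ℕ) (B : Fin n → Fin n → ℝ)
    (hnonneg : ∀ i j, i ≠ j → 0 ≤ B i j)
    (L : Matrix (Fin n) (Fin n) ℝ)
    (hLoff : ∀ i j, i ≠ j → L i j = -B i j)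
    (hLdiag : ∀ i, L i i = ∑ j ∈ Finset.univ.filter (· ≠ i), B i j)
    (d : Fin n → ℝ) (hd : ∀ i, 0 < d i)
    (hbound : ∀ i, d i * L i i ≤ 1)
    (A : Matrix (Fin n) (Fin n) ℝ)
    (hA : A = fun i j => Real.sqrt (d i) * L i j * Real.sqrt (d j))
    (hAh : A.IsHermitian) :
    ∀ i, hAh.eigenvalues i ∈ Set.Icc (0 : ℝ) 2 := by
  intro i
  have hA_conj : A = diagonal (fun i ↦ √(d i)) * L * diagonal (fun i ↦ √(d i)) := by
    ext j k
    simp [hA, diagonal_mul, mul_diagonal]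
  have hμ : hAh.eigenvalues i ∈ spectrum ℝ (diagonal d * L) := by
    rw [spectrum_diagonal_mul_eq_spectrum_sqrt_conj L hd, ← hA_conj]
    exact hAh.eigenvalues_mem_spectrum_real i
  have hoff : ∀ j k, j ≠ k → (diagonal d * L) j k ≤ 0 := fun j k hjk ↦ by
    rw [diagonal_mul, hLoff j k hjk]
    exact mul_nonpos_of_nonneg_of_nonpos (hd j).le (neg_nonpos.mpr (hnonneg j k hjk))
  have hrow : ∀ j, ∑ k, (diagonal d * L) j k = 0 := fun j ↦ by
    simp only [diagonal_mul, ← Finset.mul_sum, laplacian_row_sum_eq_zero B L hLoff hLdiag j,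
      mul_zero]
  have hdiag : ∀ j, (diagonal d * L) j j ≤ 1 := fun j ↦ by
    rw [diagonal_mul]
    exact hbound j
  simpa using spectrum_subset_Icc_of_offDiag_nonpos_of_row_sum_eq_zero hoff hrow hdiag hμ

/-- if `L` is a symmetric weighted Laplacian with nonnegative edge
weights, `D = diag d` with `dᵢ > 0`, and `dᵢ · L_{ii} ≤ 1` for all `i`, then all
eigenvalues of `D^{1/2} L D^{1/2}` lie in `[0, 2]`. -/
theorem scaled_laplacian_eigenvalues_mem_Icc (n : ℕ) (B : Fin n → Fin n → ℝ)
    (hsymm : ∀ i j, B i j = B j i) (hnonneg : ∀ i j, i ≠ j → 0 ≤ B i j)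
    (L : Matrix (Fin n) (Fin n) ℝ)
    (hLoff : ∀ i j, i ≠ j → L i j = -B i j)
    (hLdiag : ∀ i, L i i = ∑ j ∈ Finset.univ.filter (· ≠ i), B i j)
    (d : Fin n → ℝ) (hd : ∀ i, 0 < d i)
    (hbound : ∀ i, d i * L i i ≤ 1)
    (A : Matrix (Fin n) (Fin n) ℝ)
    (hA : A = fun i j => Real.sqrt (d i) * L i j * Real.sqrt (d j))
    (hAh : A.IsHermitian) :
    ∀ i, hAh.eigenvalues i ∈ Set.Icc (0 : ℝ) 2 :=
  scaled_laplacian_eigenvalues_mem_Icc_general n B hnonneg L hLoff hLdiag d hd hbound A hA hAh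
end

section
/- Let A ∈ ℂ^{n×n} be Hermitian positive semidefinite, and let Q ∈ ℂ^{n×m} have orthonormal columns (Q*Q = I). If A = Q X Q* with X Hermitian positive definite and the spectrum of X contained in (0,1], then for any diagonal matrix P(s) = diag(p₁,…,pₙ) of complex numbers, every eigenvalue of Q* P Q X lies in the set Co({p₁,…,pₙ}) · (0,1], where Co denotes the convex hull and the product is the set {c·t : c ∈ Co({pᵢ}), t ∈ (0,1]}. -/
open Matrix
open scoped ComplexOrder

/-!
Let `v` be an eigenvector of `Qᴴ P Q X` for `μ` and put `w = X v`. Then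
`μ · v⋆Xv = w⋆(QᴴPQ)w = u⋆Pu` with `u = Q w`, and since `P` is diagonal, `u⋆Pu = ‖u‖² c` with `c`
the `|uᵢ|²`-weighted mean of the `pᵢ`. As `Q` is an isometry, `‖u‖² = ‖Xv‖² = v⋆X²v`, and
`X² ≤ X` because the spectrum of `X` lies in `(0, 1]`; hence `μ = t c` with
`t = v⋆X²v / v⋆Xv ∈ (0, 1]`.
-/

namespace Matrix

variable {ι m : Type*} [Fintype ι] [Fintype m]

lemma exists_ne_zero_mulVec_eq_smul_of_mem_spectrum [DecidableEq ι] {K : Type*} [Field K]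
    {M : Matrix ι ι K} {μ : K} (hμ : μ ∈ spectrum K M) : ∃ v ≠ 0, M *ᵥ v = μ • v := by
  rw [← spectrum_toLin', ← Module.End.hasEigenvalue_iff_mem_spectrum] at hμ
  obtain ⟨v, hv⟩ := hμ.exists_hasEigenvector
  exact ⟨v, hv.2, by simpa using hv.apply_eq_smul⟩

section CommSemiring

variable {R : Type*} [CommSemiring R] [StarRing R]

lemma star_dotProduct_conjTranspose_mul_mul_mulVec (A : Matrix m ι R) (B : Matrix m m R)
    (x y : ι → R) : star x ⬝ᵥ ((Aᴴ * B * A) *ᵥ y) = star (A *ᵥ x) ⬝ᵥ (B *ᵥ (A *ᵥ y)) := by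
  rw [← mulVec_mulVec, ← mulVec_mulVec, dotProduct_mulVec, star_mulVec, vecMul_conjTranspose]

lemma star_mulVec_dotProduct_mulVec_of_conjTranspose_mul_self_eq_one [DecidableEq ι]
    {A : Matrix m ι R} (hA : Aᴴ * A = 1) (x : ι → R) :
    star (A *ᵥ x) ⬝ᵥ (A *ᵥ x) = star x ⬝ᵥ x := by
  classical
  simpa [hA] using (star_dotProduct_conjTranspose_mul_mul_mulVec A 1 x x).symm

lemma star_mulVec_dotProduct_mulVec_eq_mul_of_mulVec_eq_smul {B X : Matrix ι ι R}
    (hX : X.IsHermitian) {v : ι → R} {μ : R} (hv : (B * X) *ᵥ v = μ • v) :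
    star (X *ᵥ v) ⬝ᵥ (B *ᵥ (X *ᵥ v)) = μ * (star v ⬝ᵥ (X *ᵥ v)) := by
  rw [mulVec_mulVec, hv, dotProduct_smul, star_mulVec, ← dotProduct_mulVec, hX.eq, smul_eq_mul]

end CommSemiring

variable {𝕜 : Type*} [RCLike 𝕜] [DecidableEq ι]

lemma exists_mem_convexHull_star_dotProduct_diagonal_mulVec_eq (p : ι → 𝕜) {u : ι → 𝕜}
    (hu : u ≠ 0) :
    ∃ c ∈ convexHull ℝ (Set.range p), star u ⬝ᵥ (diagonal p *ᵥ u) = (star u ⬝ᵥ u) * c := by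
  set w : ι → ℝ := fun i => ‖u i‖ ^ 2
  have hsum : star u ⬝ᵥ u = ((∑ i, w i : ℝ) : 𝕜) := by
    simp [dotProduct, w, RCLike.conj_mul]
  have hpos : 0 < ∑ i, w i := by
    have hu' := dotProduct_star_self_pos_iff.2 hu
    rw [hsum] at hu'
    exact_mod_cast hu'
  refine ⟨Finset.univ.centerMass w p,
    Finset.univ.centerMass_mem_convexHull (fun i _ => by positivity) hpos
      (fun i _ => Set.mem_range_self i), ?_⟩
  rw [hsum, ← RCLike.real_smul_eq_coe_mul, Finset.centerMass, smul_inv_smul₀ hpos.ne', dotProduct]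
  refine Finset.sum_congr rfl fun i _ => ?_
  rw [mulVec_diagonal, Pi.star_apply, RCLike.star_def, ← mul_assoc, mul_right_comm,
    RCLike.conj_mul, RCLike.real_smul_eq_coe_mul, RCLike.ofReal_pow]

namespace IsHermitian

variable {X : Matrix ι ι 𝕜} (hX : X.IsHermitian)
include hX

open scoped MatrixOrder in
lemma posSemidef_sub_mul_self (h : ∀ i, hX.eigenvalues i ∈ Set.Icc (0 : ℝ) 1) :
    (X - X * X).PosSemidef := by
  have hXsa : IsSelfAdjoint X := hX
  have hcfc : X - X * X = cfc (fun x : ℝ => x - x * x) X := by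
    rw [cfc_sub _ _ X, cfc_mul _ _ X, cfc_id' ℝ X]
  rw [← nonneg_iff_posSemidef, hcfc]
  refine cfc_nonneg fun x hx => ?_
  obtain ⟨i, rfl⟩ := hX.spectrum_real_eq_range_eigenvalues ▸ hx
  nlinarith [(h i).1, (h i).2]

lemma star_mulVec_dotProduct_mulVec_le (h : ∀ i, hX.eigenvalues i ∈ Set.Icc (0 : ℝ) 1)
    (v : ι → 𝕜) : star (X *ᵥ v) ⬝ᵥ (X *ᵥ v) ≤ star v ⬝ᵥ (X *ᵥ v) := by
  rw [star_mulVec, ← dotProduct_mulVec, hX.eq, mulVec_mulVec, ← sub_nonneg, ← dotProduct_sub,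
    ← sub_mulVec]
  exact (hX.posSemidef_sub_mul_self h).dotProduct_mulVec_nonneg v

end IsHermitian

end Matrix

lemma RCLike.exists_ofReal_mem_Ioc_of_pos_of_le {𝕜 : Type*} [RCLike 𝕜] {z w : 𝕜} (hz : 0 < z)
    (hzw : z ≤ w) : ∃ t ∈ Set.Ioc (0 : ℝ) 1, z = t * w := by
  obtain ⟨a, ha, rfl⟩ := RCLike.pos_iff_exists_ofReal.1 hz
  obtain ⟨b, hb, rfl⟩ := RCLike.pos_iff_exists_ofReal.1 (hz.trans_le hzw)
  have hab : a ≤ b := RCLike.ofReal_le_ofReal.1 hzw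
  exact ⟨a / b, ⟨div_pos ha hb, div_le_one_of_le₀ hab hb.le⟩, by
    rw [← RCLike.ofReal_mul, div_mul_cancel₀ _ hb.ne']⟩

theorem eigenvalues_mem_convexHull_mul_Ioc_general (n m : ℕ)
    (Q : Matrix (Fin n) (Fin m) ℂ) (hQ : Qᴴ * Q = 1)
    (X : Matrix (Fin m) (Fin m) ℂ) (hX : X.PosDef)
    (hXspec : ∀ i, hX.1.eigenvalues i ∈ Set.Ioc (0 : ℝ) 1)
    (p : Fin n → ℂ) :
    ∀ μ ∈ spectrum ℂ (Qᴴ * Matrix.diagonal p * Q * X),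
      ∃ c ∈ convexHull ℝ (Set.range p), ∃ t : ℝ, t ∈ Set.Ioc (0 : ℝ) 1 ∧
        μ = (t : ℂ) * c := by
  intro μ hμ
  obtain ⟨v, hv0, hv⟩ := exists_ne_zero_mulVec_eq_smul_of_mem_spectrum hμ
  have hd : 0 < star v ⬝ᵥ (X *ᵥ v) := hX.dotProduct_mulVec_pos hv0
  have hQXv : 0 < star (Q *ᵥ (X *ᵥ v)) ⬝ᵥ (Q *ᵥ (X *ᵥ v)) := by
    rw [star_mulVec_dotProduct_mulVec_of_conjTranspose_mul_self_eq_one hQ,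
      dotProduct_star_self_pos_iff]
    rintro hXv
    simp [hXv] at hd
  obtain ⟨c, hc, hPc⟩ := exists_mem_convexHull_star_dotProduct_diagonal_mulVec_eq p
    (dotProduct_star_self_pos_iff.1 hQXv)
  obtain ⟨t, ht, hQXv_eq⟩ := RCLike.exists_ofReal_mem_Ioc_of_pos_of_le hQXv <|
    (star_mulVec_dotProduct_mulVec_of_conjTranspose_mul_self_eq_one hQ _).trans_le <|
      hX.1.star_mulVec_dotProduct_mulVec_le (fun i => Set.Ioc_subset_Icc_self (hXspec i)) v
  refine ⟨c, hc, t, ht, mul_right_cancel₀ hd.ne' ?_⟩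
  calc μ * (star v ⬝ᵥ (X *ᵥ v))
      = star (X *ᵥ v) ⬝ᵥ ((Qᴴ * diagonal p * Q) *ᵥ (X *ᵥ v)) :=
        (star_mulVec_dotProduct_mulVec_eq_mul_of_mulVec_eq_smul hX.1 hv).symm
    _ = star (Q *ᵥ (X *ᵥ v)) ⬝ᵥ (Q *ᵥ (X *ᵥ v)) * c := by
        rw [star_dotProduct_conjTranspose_mul_mul_mulVec, hPc]
    _ = t * c * (star v ⬝ᵥ (X *ᵥ v)) := by
        rw [hQXv_eq, RCLike.ofReal_eq_complex_ofReal]; ring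

/-- eigenvalue containment. If `A = Q X Qᴴ` is Hermitian PSD with
`QᴴQ = I`, `X` Hermitian positive definite with spectrum in `(0,1]`, then every
eigenvalue of `Qᴴ P Q X`, for `P = diag(p₁,…,pₙ)`, lies in `Co({pᵢ})·(0,1]`. -/
theorem eigenvalues_mem_convexHull_mul_Ioc (n m : ℕ)
    (Q : Matrix (Fin n) (Fin m) ℂ) (hQ : Qᴴ * Q = 1)
    (X : Matrix (Fin m) (Fin m) ℂ) (hX : X.PosDef)
    (hXspec : ∀ i, hX.1.eigenvalues i ∈ Set.Ioc (0 : ℝ) 1)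
    (A : Matrix (Fin n) (Fin n) ℂ) (hA : A.PosSemidef) (hAQ : A = Q * X * Qᴴ)
    (p : Fin n → ℂ) :
    ∀ μ ∈ spectrum ℂ (Qᴴ * Matrix.diagonal p * Q * X),
      ∃ c ∈ convexHull ℝ (Set.range p), ∃ t : ℝ, t ∈ Set.Ioc (0 : ℝ) 1 ∧
        μ = (t : ℂ) * c :=
  eigenvalues_mem_convexHull_mul_Ioc_general n m Q hQ X hX hXspec p
end

section
/- Let p₁,…,pₙ ∈ ℂ and s ∈ ℂ be fixed, and suppose h ∈ ℂ is nonzero with Re(h·(s + k·pᵢ)) > 0 for all i and all k ∈ (0,1]. Then -s is not an eigenvalue of Q* P Q X for any Q ∈ ℂ^{n×m} with Q*Q = I, P = diag(p₁,…,pₙ), and X Hermitian positive definite with eigenvalues in (0,1]. -/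
open Matrix
open scoped ComplexOrder Pointwise

/-!
Let `μ` be an eigenvalue of `Qᴴ P Q X` with eigenvector `v`, and put `y = X v`, `u = Q y`.
Then `∑ |uᵢ|² pᵢ = yᴴ Qᴴ P Q y = μ · vᴴ X v`, while `∑ |uᵢ|² = ‖y‖² = vᴴ X² v ≤ vᴴ X v` because
`X² ≤ X`. Hence `μ = t c` with `t = ‖u‖² / vᴴ X v ∈ (0,1]` and `c` the `|uᵢ|²`-weighted mean of
the `pᵢ`. If `μ = -s`, the open half-plane `{z | 0 < Re (h (s + t z))}` contains every `pᵢ`,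
hence `c`, whereas `s + t c = 0`.
-/

namespace Matrix

lemma IsHermitian.posSemidef_sub_mul_self_s11 {𝕜 n : Type*} [RCLike 𝕜] [Fintype n] [DecidableEq n]
    {A : Matrix n n 𝕜} (hA : A.IsHermitian) (h : ∀ i, hA.eigenvalues i ∈ Set.Icc (0 : ℝ) 1) :
    (A - A * A).PosSemidef := by
  open scoped MatrixOrder in
  rw [← nonneg_iff_posSemidef, show A - A * A = cfc (fun x : ℝ => x - x * x) A by
    rw [cfc_sub .., cfc_mul .., cfc_id' ℝ A]]
  refine cfc_nonneg fun x hx => ?_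
  obtain ⟨i, rfl⟩ := hA.spectrum_real_eq_range_eigenvalues ▸ hx
  exact sub_nonneg.2 (mul_le_of_le_one_left (h i).1 (h i).2)

lemma exists_mulVec_eq_smul_of_mem_spectrum {K n : Type*} [Field K] [Fintype n] [DecidableEq n]
    {A : Matrix n n K} {μ : K} (h : μ ∈ spectrum K A) : ∃ v, v ≠ 0 ∧ A *ᵥ v = μ • v := by
  rw [← spectrum_toLin', ← Module.End.hasEigenvalue_iff_mem_spectrum] at h
  obtain ⟨v, hv⟩ := h.exists_hasEigenvector
  exact ⟨v, hv.2, by simpa using hv.apply_eq_smul⟩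

section StarRing

variable {R ι κ : Type*} [CommRing R] [StarRing R] [Fintype ι] [Fintype κ]

lemma star_mulVec_dotProduct_mulVec_mulVec (Q : Matrix ι κ R) (A : Matrix ι ι R) (y : κ → R) :
    star (Q *ᵥ y) ⬝ᵥ (A *ᵥ (Q *ᵥ y)) = star y ⬝ᵥ ((Qᴴ * A * Q) *ᵥ y) := by
  rw [star_mulVec, ← dotProduct_mulVec, mulVec_mulVec, mulVec_mulVec, Matrix.mul_assoc]

lemma star_mulVec_dotProduct_of_mul_mulVec_eq_smul {A B : Matrix κ κ R} (hA : A.IsHermitian)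
    {v : κ → R} {μ : R} (hv : (B * A) *ᵥ v = μ • v) :
    star (A *ᵥ v) ⬝ᵥ (B *ᵥ (A *ᵥ v)) = μ * (star v ⬝ᵥ (A *ᵥ v)) := by
  rw [mulVec_mulVec, hv, dotProduct_smul, star_mulVec, ← dotProduct_mulVec, hA.eq, smul_eq_mul]

end StarRing

lemma star_dotProduct_diagonal_mulVec {ι : Type*} [Fintype ι] [DecidableEq ι] (p : ι → ℂ)
    (u : ι → ℂ) : star u ⬝ᵥ (diagonal p *ᵥ u) = ∑ i, (Complex.normSq (u i) : ℂ) * p i := by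
  simp only [dotProduct, mulVec_diagonal, Pi.star_apply, Complex.star_def,
    Complex.normSq_eq_conj_mul_self]
  exact Finset.sum_congr rfl fun i _ => by ring

lemma spectrum_conjTranspose_mul_diagonal_mul_mul_subset {ι κ : Type*} [Fintype ι] [DecidableEq ι]
    [Fintype κ] [DecidableEq κ] (p : ι → ℂ) {Q : Matrix ι κ ℂ} (hQ : Qᴴ * Q = 1)
    {X : Matrix κ κ ℂ} (hX : X.PosDef) (hX₁ : ∀ i, hX.1.eigenvalues i ≤ 1) :
    spectrum ℂ (Qᴴ * diagonal p * Q * X) ⊆ Set.Ioc (0 : ℝ) 1 • convexHull ℝ (Set.range p) := by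
  intro μ hμ
  obtain ⟨v, hv0, hv⟩ := exists_mulVec_eq_smul_of_mem_spectrum hμ
  set y := X *ᵥ v
  set w : ι → ℝ := fun i => Complex.normSq ((Q *ᵥ y) i)
  set a := (star v ⬝ᵥ y).re
  have ha : star v ⬝ᵥ y = a :=
    Complex.ext rfl (by simpa using hX.1.im_star_dotProduct_mulVec_self v)
  have ha₀ : 0 < a := hX.re_dotProduct_pos hv0
  have hy₀ : y ≠ 0 := fun h => by simp [a, h] at ha₀
  have hw : (∑ i, w i : ℂ) = star y ⬝ᵥ y := by
    simpa [hQ] using (star_dotProduct_diagonal_mulVec 1 (Q *ᵥ y)).symm.trans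
      (star_mulVec_dotProduct_mulVec_mulVec Q 1 y)
  have hw₀ : 0 < ∑ i, w i := by
    have := (dotProduct_star_self_pos_iff (v := y)).2 hy₀
    rw [← hw] at this
    exact_mod_cast this
  have hyy : star y ⬝ᵥ y = star v ⬝ᵥ ((X * X) *ᵥ v) := by
    rw [star_mulVec, ← dotProduct_mulVec, mulVec_mulVec, hX.1.eq]
  have hwa : ∑ i, w i ≤ a := by
    have := (hX.1.posSemidef_sub_mul_self_s11 fun i =>
      ⟨(hX.eigenvalues_pos i).le, hX₁ i⟩).re_dotProduct_nonneg v
    rw [sub_mulVec, dotProduct_sub, ← hyy, ← hw] at this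
    simpa [a] using this
  have hwp : ∑ i, (w i : ℂ) * p i = μ * a := by
    rw [← star_dotProduct_diagonal_mulVec, star_mulVec_dotProduct_mulVec_mulVec, ← ha]
    exact star_mulVec_dotProduct_of_mul_mulVec_eq_smul hX.1 hv
  refine ⟨(∑ i, w i) / a, ⟨div_pos hw₀ ha₀, (div_le_one ha₀).2 hwa⟩,
    Finset.univ.centerMass w p, Finset.univ.centerMass_mem_convexHull
      (fun i _ => Complex.normSq_nonneg _) hw₀ (fun i _ => Set.mem_range_self i), ?_⟩
  simp only [Finset.centerMass, Complex.real_smul, hwp, Complex.ofReal_div, Complex.ofReal_inv]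
  have : (a : ℂ) ≠ 0 := by exact_mod_cast ha₀.ne'
  have : ((∑ i, w i : ℝ) : ℂ) ≠ 0 := by exact_mod_cast hw₀.ne'
  field_simp

end Matrix

lemma neg_notMem_smul_convexHull_of_re_mul_pos {ι : Type*} (p : ι → ℂ) (s h : ℂ) {T : Set ℝ}
    (hsep : ∀ i, ∀ k : ℝ, k ∈ T → 0 < (h * (s + (k : ℂ) * p i)).re) :
    -s ∉ T • convexHull ℝ (Set.range p) := by
  rintro ⟨t, ht, c, hc, htc : t • c = -s⟩
  have hconv : Convex ℝ {z : ℂ | 0 < (h * (s + t * z)).re} := by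
    simp_rw [mul_add, ← mul_assoc]
    exact ((convex_halfSpace_re_gt 0).translate_preimage_right (h * s)).linear_preimage
      (LinearMap.mulLeft ℝ (h * t))
  have hpos : 0 < (h * (s + t * c)).re :=
    convexHull_min (Set.range_subset_iff.2 fun i => show p i ∈ _ from hsep i t ht) hconv hc
  rw [← Complex.real_smul, htc, add_neg_cancel, mul_zero, Complex.zero_re] at hpos
  exact lt_irrefl 0 hpos

theorem neg_s_not_eigenvalue_general (n : ℕ) (p : Fin n → ℂ) (s : ℂ) (h : ℂ)
    (hsep : ∀ i, ∀ k : ℝ, k ∈ Set.Ioc (0 : ℝ) 1 →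
      0 < (h * (s + (k : ℂ) * p i)).re) :
    ∀ (m : ℕ) (Q : Matrix (Fin n) (Fin m) ℂ), Qᴴ * Q = 1 →
      ∀ (X : Matrix (Fin m) (Fin m) ℂ) (hX : X.PosDef),
        (∀ i, hX.1.eigenvalues i ∈ Set.Ioc (0 : ℝ) 1) →
        -s ∉ spectrum ℂ (Qᴴ * Matrix.diagonal p * Q * X) := by
  intro m Q hQ X hX hXev hs
  exact neg_notMem_smul_convexHull_of_re_mul_pos p s h hsep
    (spectrum_conjTranspose_mul_diagonal_mul_mul_subset p hQ hX (fun i => (hXev i).2) hs)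

/-- if a nonzero direction `h` satisfies the strict separation
condition `Re (h·(s + k·pᵢ)) > 0` for all `i` and all `k ∈ (0,1]`, then `-s`
is not an eigenvalue of `Qᴴ P Q X` for any `Q` with orthonormal columns and
any Hermitian positive definite `X` with eigenvalues in `(0,1]`. -/
theorem neg_s_not_eigenvalue (n : ℕ) (p : Fin n → ℂ) (s : ℂ) (h : ℂ)
    (hh : h ≠ 0)
    (hsep : ∀ i, ∀ k : ℝ, k ∈ Set.Ioc (0 : ℝ) 1 →
      0 < (h * (s + (k : ℂ) * p i)).re) :
    ∀ (m : ℕ) (Q : Matrix (Fin n) (Fin m) ℂ), Qᴴ * Q = 1 →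
      ∀ (X : Matrix (Fin m) (Fin m) ℂ) (hX : X.PosDef),
        (∀ i, hX.1.eigenvalues i ∈ Set.Ioc (0 : ℝ) 1) →
        -s ∉ spectrum ℂ (Qᴴ * Matrix.diagonal p * Q * X) :=
  neg_s_not_eigenvalue_general n p s h hsep
end
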